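/- arXiv:0909.5685 — 3 statements merged into one kernel-verified Lean document; each statement's English description precedes it below -/
import Mathlib

section
/- Let u : ℝ² → ℝ be a twice continuously differentiable function of (y,τ) satisfying the sinh-Gordon equation u_{yτ} = sinh u. Define v, w : ℝ³ → ℝ of the variables (x,y,τ) by v(x,y,τ) = u_y(y,τ) cos x and w(x,y,τ) = −sinh(u(y,τ)) sin x + cosh(u(y,τ)). Then (v,w) solves the system (max1): v_τ + w_x = 0 and w_y + v w_x − w v_x = 0. -/
/-!
Both identities are pointwise consequences of the chain and product rules. Writing `s = sinh u`,
`c = cosh u`, one has `v_τ = u_{yτ} cos x = s cos x = -w_x` by the sinh-Gordon equation, and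
`w_y + v w_x - w v_x = (s - c sin x) u_y - s u_y cos² x + (c - s sin x) u_y sin x`, which is
`s u_y (1 - sin² x - cos² x) = 0`.
-/

/-- Partial derivative of `f : ℝⁿ → ℝ` in the `i`-th coordinate direction. -/
noncomputable def pd {n : ℕ} (i : Fin n) (f : (Fin n → ℝ) → ℝ) (x : Fin n → ℝ) : ℝ :=
  fderiv ℝ f x (Pi.single i 1)

section PartialDerivative

variable {n : ℕ} {f g : (Fin n → ℝ) → ℝ} {x : Fin n → ℝ}

theorem HasFDerivAt.pd_eq {f' : (Fin n → ℝ) →L[ℝ] ℝ} (h : HasFDerivAt f f' x) (i : Fin n) :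
    pd i f x = f' (Pi.single i 1) := by
  rw [pd, h.fderiv]

theorem pd_add (hf : DifferentiableAt ℝ f x) (hg : DifferentiableAt ℝ g x) (i : Fin n) :
    pd i (fun y => f y + g y) x = pd i f x + pd i g x :=
  (hf.hasFDerivAt.add hg.hasFDerivAt).pd_eq i

theorem pd_mul (hf : DifferentiableAt ℝ f x) (hg : DifferentiableAt ℝ g x) (i : Fin n) :
    pd i (fun y => f y * g y) x = f x * pd i g x + g x * pd i f x :=
  (hf.hasFDerivAt.mul hg.hasFDerivAt).pd_eq i

theorem pd_comp {h : ℝ → ℝ} {h' : ℝ} (hh : HasDerivAt h h' (f x)) (hf : DifferentiableAt ℝ f x)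
    (i : Fin n) : pd i (fun y => h (f y)) x = h' * pd i f x :=
  (hh.comp_hasFDerivAt x hf.hasFDerivAt).pd_eq i

theorem pd_neg (i : Fin n) : pd i (fun y => -f y) x = -pd i f x := by
  rw [pd, fderiv_fun_neg]
  rfl

theorem pd_apply (i j : Fin n) : pd i (fun y => y j) x = (Pi.single i 1 : Fin n → ℝ) j :=
  (hasFDerivAt_apply j x).pd_eq i

theorem ContDiff.pd {k : WithTop ℕ∞} (hf : ContDiff ℝ (k + 1) f) (i : Fin n) :
    ContDiff ℝ k (_root_.pd i f) :=
  ((ContinuousLinearMap.apply ℝ ℝ (Pi.single i 1)).contDiff.comp (hf.fderiv_right le_rfl) :)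

end PartialDerivative

section Tail

variable {n : ℕ}

def finTailCLM (n : ℕ) : (Fin (n + 1) → ℝ) →L[ℝ] (Fin n → ℝ) :=
  ContinuousLinearMap.pi fun j => ContinuousLinearMap.proj j.succ

theorem finTailCLM_single_zero : finTailCLM n (Pi.single 0 1) = 0 := by
  ext j; simp [finTailCLM, Fin.succ_ne_zero]

theorem finTailCLM_single_succ (i : Fin n) :
    finTailCLM n (Pi.single i.succ 1) = Pi.single i 1 := by
  ext j; simp [finTailCLM, Pi.single_apply]

@[fun_prop]
theorem differentiable_finTail : Differentiable ℝ (fun x : Fin (n + 1) → ℝ => Fin.tail x) :=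
  (finTailCLM n).differentiable

variable {g : (Fin n → ℝ) → ℝ} {x : Fin (n + 1) → ℝ}

theorem hasFDerivAt_comp_finTail (hg : DifferentiableAt ℝ g (Fin.tail x)) :
    HasFDerivAt (fun y => g (Fin.tail y)) ((fderiv ℝ g (Fin.tail x)).comp (finTailCLM n)) x :=
  hg.hasFDerivAt.comp x (finTailCLM n).hasFDerivAt

theorem pd_zero_comp_finTail (hg : DifferentiableAt ℝ g (Fin.tail x)) :
    pd 0 (fun y => g (Fin.tail y)) x = 0 := by
  rw [(hasFDerivAt_comp_finTail hg).pd_eq, ContinuousLinearMap.comp_apply,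
    finTailCLM_single_zero, map_zero]

theorem pd_succ_comp_finTail (hg : DifferentiableAt ℝ g (Fin.tail x)) (i : Fin n) :
    pd i.succ (fun y => g (Fin.tail y)) x = pd i g (Fin.tail x) := by
  rw [(hasFDerivAt_comp_finTail hg).pd_eq, ContinuousLinearMap.comp_apply,
    finTailCLM_single_succ, pd]

end Tail

section Ansatz

open Real

variable {n : ℕ} {G U : (Fin n → ℝ) → ℝ} {x : Fin (n + 1) → ℝ}

theorem pd_zero_mul_cos (hG : DifferentiableAt ℝ G (Fin.tail x)) :
    pd 0 (fun y => G (Fin.tail y) * cos (y 0)) x = -(G (Fin.tail x) * sin (x 0)) := by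
  rw [pd_mul (by fun_prop) (by fun_prop), pd_zero_comp_finTail hG,
    pd_comp (hasDerivAt_cos _) (by fun_prop), pd_apply]
  simp

theorem pd_succ_mul_cos (hG : DifferentiableAt ℝ G (Fin.tail x)) (i : Fin n) :
    pd i.succ (fun y => G (Fin.tail y) * cos (y 0)) x = cos (x 0) * pd i G (Fin.tail x) := by
  rw [pd_mul (by fun_prop) (by fun_prop), pd_succ_comp_finTail hG,
    pd_comp (hasDerivAt_cos _) (by fun_prop), pd_apply]
  simp [Fin.succ_ne_zero]

theorem pd_zero_sinh_sin_cosh (hU : DifferentiableAt ℝ U (Fin.tail x)) :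
    pd 0 (fun y => -sinh (U (Fin.tail y)) * sin (y 0) + cosh (U (Fin.tail y))) x =
      -(sinh (U (Fin.tail x)) * cos (x 0)) := by
  rw [pd_add (by fun_prop) (by fun_prop), pd_mul (by fun_prop) (by fun_prop), pd_neg,
    pd_comp (hasDerivAt_sinh _) (by fun_prop), pd_comp (hasDerivAt_cosh _) (by fun_prop),
    pd_zero_comp_finTail hU, pd_comp (hasDerivAt_sin _) (by fun_prop), pd_apply]
  simp

theorem pd_succ_sinh_sin_cosh (hU : DifferentiableAt ℝ U (Fin.tail x)) (i : Fin n) :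
    pd i.succ (fun y => -sinh (U (Fin.tail y)) * sin (y 0) + cosh (U (Fin.tail y))) x =
      (sinh (U (Fin.tail x)) - cosh (U (Fin.tail x)) * sin (x 0)) * pd i U (Fin.tail x) := by
  rw [pd_add (by fun_prop) (by fun_prop), pd_mul (by fun_prop) (by fun_prop), pd_neg,
    pd_comp (hasDerivAt_sinh _) (by fun_prop), pd_comp (hasDerivAt_cosh _) (by fun_prop),
    pd_succ_comp_finTail hU, pd_comp (hasDerivAt_sin _) (by fun_prop), pd_apply]
  simp [Fin.succ_ne_zero]
  ring

end Ansatz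

/-- `u` has coordinates `(y,τ)` = indices `(0,1)`; `v, w` have coordinates `(x,y,τ)` =
indices `(0,1,2)`. -/
theorem stmt9 (u : (Fin 2 → ℝ) → ℝ) (hu : ContDiff ℝ 2 u)
    (hSG : ∀ p : Fin 2 → ℝ, pd 1 (pd 0 u) p = Real.sinh (u p))
    (v w : (Fin 3 → ℝ) → ℝ)
    (hvdef : ∀ x : Fin 3 → ℝ, v x = pd 0 u ![x 1, x 2] * Real.cos (x 0))
    (hwdef : ∀ x : Fin 3 → ℝ,
        w x = -Real.sinh (u ![x 1, x 2]) * Real.sin (x 0) + Real.cosh (u ![x 1, x 2])) :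
    (∀ x, pd 2 v x + pd 0 w x = 0) ∧
    (∀ x, pd 1 w x + v x * pd 0 w x - w x * pd 0 v x = 0) := by
  have htail (x : Fin 3 → ℝ) : ![x 1, x 2] = Fin.tail x := by
    ext i; fin_cases i <;> rfl
  have hv : v = fun x => pd 0 u (Fin.tail x) * Real.cos (x 0) := by
    ext x; rw [hvdef, htail]
  have hw : w = fun x =>
      -Real.sinh (u (Fin.tail x)) * Real.sin (x 0) + Real.cosh (u (Fin.tail x)) := by
    ext x; rw [hwdef, htail]
  have hu' : Differentiable ℝ u := hu.differentiable two_ne_zero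
  have huy : Differentiable ℝ (pd 0 u) := (hu.pd 0).differentiable one_ne_zero
  subst hv hw
  refine ⟨fun x => ?_, fun x => ?_⟩
  · rw [show (2 : Fin 3) = Fin.succ 1 from rfl, pd_succ_mul_cos (huy _),
      pd_zero_sinh_sin_cosh (hu' _), hSG]
    ring
  · rw [show (1 : Fin 3) = Fin.succ 0 from rfl, pd_succ_sinh_sin_cosh (hu' _),
      pd_zero_mul_cos (huy _), pd_zero_sinh_sin_cosh (hu' _)]
    linear_combination
      (-(Real.sinh (u (Fin.tail x)) * pd 0 u (Fin.tail x))) * Real.sin_sq_add_cos_sq (x 0)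
end

section
/- Let N ≥ 2 and for R = (R¹, …, R^N) ∈ ℝ^N and 1 ≤ i ≤ N define λ^i(R) = Π_{k≠i} R^k and μ^i(R) = Σ_{k≠i} R^k − Π_{k≠i} R^k. Then for all R ∈ ℝ^N and all i ≠ j, the Tsarev commutativity condition holds in the polynomial form (∂λ^i/∂R^j)·(μ^j − μ^i) = (∂μ^i/∂R^j)·(λ^j − λ^i). -/
open Finset

section PartialDerivatives

variable {n : ℕ} {j : Fin n} (R : Fin n → ℝ)

lemma pd_sub {f g : (Fin n → ℝ) → ℝ} (hf : DifferentiableAt ℝ f R)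
    (hg : DifferentiableAt ℝ g R) :
    pd j (fun x => f x - g x) R = pd j f R - pd j g R := by
  simp only [pd, fderiv_fun_sub hf hg, sub_apply]

variable {u : Finset (Fin n)} (hj : j ∈ u)
include hj

lemma pd_sum_apply_of_mem : pd j (fun x => ∑ k ∈ u, x k) R = 1 := by
  rw [pd, (HasFDerivAt.fun_sum fun k _ => hasFDerivAt_apply k R).fderiv,
    _root_.sum_apply, sum_eq_single_of_mem j hj fun k _ hkj => by simp [hkj]]
  simp

lemma pd_prod_apply_of_mem : pd j (fun x => ∏ k ∈ u, x k) R = ∏ k ∈ u.erase j, R k := by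
  rw [pd, (HasFDerivAt.finsetProd fun k _ => hasFDerivAt_apply k R).fderiv,
    _root_.sum_apply, sum_eq_single_of_mem j hj fun k _ hkj => by simp [hkj]]
  simp

end PartialDerivatives

theorem stmt12_general (N : ℕ)
    (lam mu : Fin N → (Fin N → ℝ) → ℝ)
    (hlam : ∀ (i : Fin N) (R : Fin N → ℝ), lam i R = ∏ k ∈ Finset.univ.erase i, R k)
    (hmu : ∀ (i : Fin N) (R : Fin N → ℝ),
        mu i R = (∑ k ∈ Finset.univ.erase i, R k) - ∏ k ∈ Finset.univ.erase i, R k) :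
    ∀ (R : Fin N → ℝ) (i j : Fin N), i ≠ j →
      pd j (lam i) R * (mu j R - mu i R) = pd j (mu i) R * (lam j R - lam i R) := by
  intro R i j hij
  have hj : j ∈ univ.erase i := mem_erase.2 ⟨hij.symm, mem_univ j⟩
  have hi : i ∈ univ.erase j := mem_erase.2 ⟨hij, mem_univ i⟩
  have hpd_lam : pd j (lam i) R = ∏ k ∈ (univ.erase i).erase j, R k := by
    rw [funext (hlam i), pd_prod_apply_of_mem R hj]
  have hpd_mu : pd j (mu i) R = 1 - ∏ k ∈ (univ.erase i).erase j, R k := by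
    rw [funext (hmu i), pd_sub R (by fun_prop) (by fun_prop), pd_sum_apply_of_mem R hj,
      pd_prod_apply_of_mem R hj]
  have hswap : (univ.erase j).erase i = (univ.erase i).erase j := erase_right_comm
  rw [hpd_lam, hpd_mu, hlam, hlam, hmu, hmu, ← mul_prod_erase _ _ hj, ← mul_prod_erase _ _ hi,
    ← add_sum_erase _ _ hj, ← add_sum_erase _ _ hi, hswap]
  ring

/-- For `λⁱ(R) = Π_{k≠i} R^k` and `μⁱ(R) = Σ_{k≠i} R^k − Π_{k≠i} R^k`, Tsarev's
commutativity conditions hold in the denominator-free form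
`(∂_j λⁱ)(μ^j − μⁱ) = (∂_j μⁱ)(λ^j − λⁱ)` for all `i ≠ j`. -/
theorem stmt12 (N : ℕ) (hN : 2 ≤ N)
    (lam mu : Fin N → (Fin N → ℝ) → ℝ)
    (hlam : ∀ (i : Fin N) (R : Fin N → ℝ), lam i R = ∏ k ∈ Finset.univ.erase i, R k)
    (hmu : ∀ (i : Fin N) (R : Fin N → ℝ),
        mu i R = (∑ k ∈ Finset.univ.erase i, R k) - ∏ k ∈ Finset.univ.erase i, R k) :
    ∀ (R : Fin N → ℝ) (i j : Fin N), i ≠ j →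
      pd j (lam i) R * (mu j R - mu i R) = pd j (mu i) R * (lam j R - lam i R) :=
  stmt12_general N lam mu hlam hmu
end

section
/- Let U ⊆ ℝ² be open and nonempty with coordinates (v,w), let a, b : U → ℝ be twice continuously differentiable and q, r, m, n : U → ℝ continuously differentiable, such that a_v, a_w, b_v, b_w, q, r are nowhere zero and a − b is nowhere zero. Let λ, μ be nonzero real constants with λ ≠ μ. Then it is impossible that simultaneously: (i) both (q,r) and (λq, μr) satisfy, with the same a, b, m, n, the equations (qr2): (q_v/q)_w = a_{vw}/(a−b) − (a_v(a_w+b_w) + a_w b_v)/(a−b)² + (a_w b_v/(a_v b_w)) m n + 2 a_w² r n/(a_v (a−b) q) and (r_v/r)_w = b_{vw}/(b−a) − (b_w(a_v+b_v) + a_w b_v)/(a−b)² + (a_w b_v/(a_v b_w)) m n + 2 b_v² q m/(b_w (b−a) r); and (ii) the first equation of (mn) holds on U: ∂_w((b_v/b_w) q m) − (b_v/b_w) q m (a_{vw}/a_v − a_w/(a−b)) + 2 n r a_w/(b−a) + 3 q a_v b_v/(a−b)² = 0. -/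
/-- Coordinates on ℝ² are `(v,w)` with indices `(0,1)` (so subscript `v` = `pd 0`,
subscript `w` = `pd 1`).  `QR2 a b q r m n U` says that the equations (qr2):
`(q_v/q)_w = a_{vw}/(a−b) − (a_v(a_w+b_w) + a_w b_v)/(a−b)² + (a_w b_v/(a_v b_w)) m n
+ 2 a_w² r n/(a_v (a−b) q)` and
`(r_v/r)_w = b_{vw}/(b−a) − (b_w(a_v+b_v) + a_w b_v)/(a−b)² + (a_w b_v/(a_v b_w)) m n
+ 2 b_v² q m/(b_w (b−a) r)` hold on `U`. -/
def QR2 (a b q r m n : (Fin 2 → ℝ) → ℝ) (U : Set (Fin 2 → ℝ)) : Prop :=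
  ∀ x ∈ U,
    (pd 1 (fun y => pd 0 q y / q y) x =
      pd 1 (pd 0 a) x / (a x - b x)
      - (pd 0 a x * (pd 1 a x + pd 1 b x) + pd 1 a x * pd 0 b x) / (a x - b x) ^ 2
      + (pd 1 a x * pd 0 b x / (pd 0 a x * pd 1 b x)) * m x * n x
      + 2 * (pd 1 a x) ^ 2 * r x * n x / (pd 0 a x * (a x - b x) * q x)) ∧
    (pd 1 (fun y => pd 0 r y / r y) x =
      pd 1 (pd 0 b) x / (b x - a x)
      - (pd 1 b x * (pd 0 a x + pd 0 b x) + pd 1 a x * pd 0 b x) / (a x - b x) ^ 2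
      + (pd 1 a x * pd 0 b x / (pd 0 a x * pd 1 b x)) * m x * n x
      + 2 * (pd 0 b x) ^ 2 * q x * m x / (pd 1 b x * (b x - a x) * r x))

/-- `MN1 a b q r m n U`: the first equation of (mn),
`∂_w((b_v/b_w) q m) − (b_v/b_w) q m (a_{vw}/a_v − a_w/(a−b)) + 2 n r a_w/(b−a)
+ 3 q a_v b_v/(a−b)² = 0`, holds on `U`. -/
def MN1 (a b q r m n : (Fin 2 → ℝ) → ℝ) (U : Set (Fin 2 → ℝ)) : Prop :=
  ∀ x ∈ U,
    pd 1 (fun y => (pd 0 b y / pd 1 b y) * q y * m y) x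
    - (pd 0 b x / pd 1 b x) * q x * m x * (pd 1 (pd 0 a) x / pd 0 a x - pd 1 a x / (a x - b x))
    + 2 * n x * r x * pd 1 a x / (b x - a x)
    + 3 * q x * pd 0 a x * pd 0 b x / (a x - b x) ^ 2 = 0


/-!
Multiplying `q` by a nonzero constant leaves `(q_v/q)_w` unchanged, so the first equation of
(qr2) for `(q, r)` and for `(λq, μr)` have the same left-hand side and differ only in the last
term, which gets multiplied by `μ/λ ≠ 1`. Hence that term vanishes, i.e. `n r a_w = 0`; the
second equation gives `(b_v/b_w) q m = 0` in the same way. On the open set `U` this kills every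
term of the first equation of (mn) except `3 q a_v b_v/(a−b)²`, which is nowhere zero.
-/

lemma pd_const_mul {N : ℕ} (i : Fin N) (f : (Fin N → ℝ) → ℝ) (c : ℝ) (x : Fin N → ℝ) :
    pd i (fun z => c * f z) x = c * pd i f x := by
  change fderiv ℝ (c • f) x _ = _
  rw [fderiv_const_smul_field]
  rfl

lemma pd_div_self_const_mul {N : ℕ} (i : Fin N) (f : (Fin N → ℝ) → ℝ) {c : ℝ} (hc : c ≠ 0) :
    (fun y => pd i (fun z => c * f z) y / (c * f y)) = fun y => pd i f y / f y := by
  funext y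
  rw [pd_const_mul, mul_div_mul_left _ _ hc]

lemma pd_eq_zero_of_eqOn_zero {N : ℕ} (i : Fin N) {f : (Fin N → ℝ) → ℝ}
    {U : Set (Fin N → ℝ)} (hU : IsOpen U) {x : Fin N → ℝ} (hx : x ∈ U) (hf : Set.EqOn f 0 U) :
    pd i f x = 0 := by
  have hev : f =ᶠ[nhds x] fun _ => 0 := Filter.eventually_of_mem (hU.mem_nhds hx) hf
  simp [pd, hev.fderiv_eq]

lemma eq_zero_of_add_eq_add_mul {E R T k : ℝ} (h : E = R + T) (h' : E = R + k * T) (hk : k ≠ 1) :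
    T = 0 :=
  (mul_left_eq_self₀.mp (by linarith : k * T = T)).resolve_left hk

section Rescaling

variable {a b q r m n : (Fin 2 → ℝ) → ℝ} {U : Set (Fin 2 → ℝ)} {lam mu : ℝ}

lemma QR2.n_mul_r_mul_pd_eq_zero (h : QR2 a b q r m n U)
    (h' : QR2 a b (fun y => lam * q y) (fun y => mu * r y) m n U)
    (hlam : lam ≠ 0) (hlm : lam ≠ mu)
    (hav : ∀ x ∈ U, pd 0 a x ≠ 0) (hq0 : ∀ x ∈ U, q x ≠ 0) (hab : ∀ x ∈ U, a x - b x ≠ 0) :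
    ∀ x ∈ U, n x * r x * pd 1 a x = 0 := by
  intro x hx
  have h₂ := (h' x hx).1
  have hscale : 2 * pd 1 a x ^ 2 * (mu * r x) * n x / (pd 0 a x * (a x - b x) * (lam * q x))
      = mu / lam * (2 * pd 1 a x ^ 2 * r x * n x / (pd 0 a x * (a x - b x) * q x)) := by
    field_simp [hav x hx, hab x hx, hq0 x hx]
  rw [pd_div_self_const_mul 0 q hlam, hscale] at h₂
  have hT := eq_zero_of_add_eq_add_mul (h x hx).1 h₂
    fun h1 => hlm ((div_eq_one_iff_eq hlam).mp h1).symm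
  simp only [div_eq_zero_iff, mul_eq_zero, pow_eq_zero_iff two_ne_zero, two_ne_zero, false_or] at hT
  simp only [mul_eq_zero]
  tauto

lemma QR2.pd_div_pd_mul_q_mul_m_eqOn_zero (h : QR2 a b q r m n U)
    (h' : QR2 a b (fun y => lam * q y) (fun y => mu * r y) m n U)
    (hmu : mu ≠ 0) (hlm : lam ≠ mu)
    (hr0 : ∀ x ∈ U, r x ≠ 0) (hab : ∀ x ∈ U, a x - b x ≠ 0) :
    Set.EqOn (fun y => (pd 0 b y / pd 1 b y) * q y * m y) 0 U := by
  intro x hx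
  have h₂ := (h' x hx).2
  have hba : b x - a x ≠ 0 := sub_ne_zero.mpr (sub_ne_zero.mp (hab x hx)).symm
  have hscale : 2 * pd 0 b x ^ 2 * (lam * q x) * m x / (pd 1 b x * (b x - a x) * (mu * r x))
      = lam / mu * (2 * pd 0 b x ^ 2 * q x * m x / (pd 1 b x * (b x - a x) * r x)) := by
    field_simp [hr0 x hx]
  rw [pd_div_self_const_mul 0 r hmu, hscale] at h₂
  have hT := eq_zero_of_add_eq_add_mul (h x hx).2 h₂
    fun h1 => hlm ((div_eq_one_iff_eq hmu).mp h1)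
  simp only [div_eq_zero_iff, mul_eq_zero, pow_eq_zero_iff two_ne_zero, two_ne_zero, false_or] at hT
  simp only [Pi.zero_apply, div_eq_zero_iff, mul_eq_zero]
  tauto

end Rescaling

theorem stmt19_general (U : Set (Fin 2 → ℝ)) (hU : IsOpen U) (hUne : U.Nonempty)
    (a b q r m n : (Fin 2 → ℝ) → ℝ)
    (hav : ∀ x ∈ U, pd 0 a x ≠ 0)
    (hbv : ∀ x ∈ U, pd 0 b x ≠ 0)
    (hq0 : ∀ x ∈ U, q x ≠ 0) (hr0 : ∀ x ∈ U, r x ≠ 0)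
    (hab : ∀ x ∈ U, a x - b x ≠ 0)
    (lam mu : ℝ) (hlam : lam ≠ 0) (hmu : mu ≠ 0) (hlm : lam ≠ mu) :
    ¬ (QR2 a b q r m n U ∧
       QR2 a b (fun y => lam * q y) (fun y => mu * r y) m n U ∧
       MN1 a b q r m n U) := by
  rintro ⟨hQ, hQ', hM⟩
  obtain ⟨x, hx⟩ := hUne
  have hP := hQ.pd_div_pd_mul_q_mul_m_eqOn_zero hQ' hmu hlm hr0 hab
  have hN := hQ.n_mul_r_mul_pd_eq_zero hQ' hlam hlm hav hq0 hab x hx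
  have hMx := hM x hx
  have hPx : pd 0 b x / pd 1 b x * q x * m x = 0 := hP hx
  rw [pd_eq_zero_of_eqOn_zero 1 hU hx hP, hPx] at hMx
  have hlast : 3 * q x * pd 0 a x * pd 0 b x / (a x - b x) ^ 2 = 0 := by
    linear_combination hMx - 2 / (b x - a x) * hN
  exact div_ne_zero (by simp [hq0 x hx, hav x hx, hbv x hx]) (pow_ne_zero 2 (hab x hx)) hlast

/-- On a nonempty open `U`, it is impossible that both `(q,r)` and the rescaled pair
`(λq, μr)` (with `λ, μ` nonzero constants, `λ ≠ μ`) satisfy the equations (qr2) with the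
same `a, b, m, n`, while simultaneously the first equation of (mn) holds on `U`. -/
theorem stmt19 (U : Set (Fin 2 → ℝ)) (hU : IsOpen U) (hUne : U.Nonempty)
    (a b q r m n : (Fin 2 → ℝ) → ℝ)
    (ha : ContDiffOn ℝ 2 a U) (hb : ContDiffOn ℝ 2 b U)
    (hq : ContDiffOn ℝ 1 q U) (hr : ContDiffOn ℝ 1 r U)
    (hm : ContDiffOn ℝ 1 m U) (hn : ContDiffOn ℝ 1 n U)
    (hav : ∀ x ∈ U, pd 0 a x ≠ 0) (haw : ∀ x ∈ U, pd 1 a x ≠ 0)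
    (hbv : ∀ x ∈ U, pd 0 b x ≠ 0) (hbw : ∀ x ∈ U, pd 1 b x ≠ 0)
    (hq0 : ∀ x ∈ U, q x ≠ 0) (hr0 : ∀ x ∈ U, r x ≠ 0)
    (hab : ∀ x ∈ U, a x - b x ≠ 0)
    (lam mu : ℝ) (hlam : lam ≠ 0) (hmu : mu ≠ 0) (hlm : lam ≠ mu) :
    ¬ (QR2 a b q r m n U ∧
       QR2 a b (fun y => lam * q y) (fun y => mu * r y) m n U ∧
       MN1 a b q r m n U) :=
  stmt19_general U hU hUne a b q r m n hav hbv hq0 hr0 hab lam mu hlam hmu hlm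
end
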